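/- Constrained entropy representation of the free energy: F(τ) = max over probability distributions q on {0,1}^p with E_q[X] = τ of [H(q) + E_q log h(X)], for every τ ∈ (0,1)^p. -/

import Mathlib

open Finset

/-- Value of a Boolean coordinate as a real number. -/
noncomputable def bval (b : Bool) : ℝ := if b then 1 else 0

/-- Scalar product `⟨θ, x⟩` for `x ∈ {0,1}^p`. -/
noncomputable def ip {p : ℕ} (θ : Fin p → ℝ) (x : Fin p → Bool) : ℝ :=
  ∑ i, θ i * bval (x i)

/-- Partition function `Z(θ)`. -/
noncomputable def Zfun {p : ℕ} (h : (Fin p → Bool) → ℝ) (θ : Fin p → ℝ) : ℝ :=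
  ∑ x : Fin p → Bool, h x * Real.exp (ip θ x)

/-- Log-partition function `A(θ)`. -/
noncomputable def Afun {p : ℕ} (h : (Fin p → Bool) → ℝ) (θ : Fin p → ℝ) : ℝ :=
  Real.log (Zfun h θ)

/-- Density `p_θ(x)` of the exponential family. -/
noncomputable def pdens {p : ℕ} (h : (Fin p → Bool) → ℝ) (θ : Fin p → ℝ)
    (x : Fin p → Bool) : ℝ :=
  h x * Real.exp (ip θ x) / Zfun h θ

/-- Mean `τ_*(θ)_i = E_θ[X_i]`. -/
noncomputable def meanMap {p : ℕ} (h : (Fin p → Bool) → ℝ) (θ : Fin p → ℝ) (i : Fin p) : ℝ :=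
  ∑ x : Fin p → Bool, bval (x i) * pdens h θ x

/-- The free energy: Legendre–Fenchel transform of the log-partition function. -/
noncomputable def Ffun {p : ℕ} (h : (Fin p → Bool) → ℝ) (τ : Fin p → ℝ) : ℝ :=
  ⨅ θ : Fin p → ℝ, (Afun h θ - ∑ i, τ i * θ i)

/-- Shannon entropy of a pmf on `{0,1}^p`. -/
noncomputable def shEntropy {p : ℕ} (q : (Fin p → Bool) → ℝ) : ℝ :=
  -∑ x : Fin p → Bool, q x * Real.log (q x)

/-! Weak duality: for every `θ`, Gibbs' inequality against the exponential-family density `p_θ`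
gives `H(q) + E_q log h ≤ A(θ) - ⟨τ, θ⟩` for every `q` with mean `τ`. For `τ` in the open cube the
right-hand side grows like `min (τᵢ, 1 - τᵢ) |θᵢ|` in each coordinate, so it attains its infimum
at some `θ₀`; stationarity there says that `p_{θ₀}` has mean `τ`, and `q = p_{θ₀}` turns Gibbs'
inequality into an equality. -/

open Real

lemma mul_log_sub_mul_log_le {q r : ℝ} (hq : 0 ≤ q) (hr : 0 < r) :
    q * log r - q * log q ≤ r - q := by
  rcases hq.eq_or_lt with rfl | hq
  · simpa using hr.le
  calc q * log r - q * log q = q * log (r / q) := by rw [log_div hr.ne' hq.ne', mul_sub]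
    _ ≤ q * (r / q - 1) := mul_le_mul_of_nonneg_left (log_le_sub_one_of_pos (by positivity)) hq.le
    _ = r - q := by field_simp

lemma sum_mul_log_le_sum_mul_log_self {X : Type*} [Fintype X] {q r : X → ℝ}
    (hq : ∀ x, 0 ≤ q x) (hr : ∀ x, 0 < r x) (hsum : ∑ x, r x ≤ ∑ x, q x) :
    ∑ x, q x * log (r x) ≤ ∑ x, q x * log (q x) := by
  have := Finset.sum_le_sum fun x (_ : x ∈ univ) => mul_log_sub_mul_log_le (hq x) (hr x)
  simp only [Finset.sum_sub_distrib] at this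
  linarith

section ExponentialFamily

variable {p : ℕ} {h : (Fin p → Bool) → ℝ}

lemma ip_add_smul (θ v : Fin p → ℝ) (t : ℝ) (x : Fin p → Bool) :
    ip (θ + t • v) x = ip θ x + t * ip v x := by
  simp only [ip, Pi.add_apply, Pi.smul_apply, smul_eq_mul, add_mul, Finset.sum_add_distrib,
    Finset.mul_sum, mul_assoc]

lemma sum_mul_ip (q : (Fin p → Bool) → ℝ) (θ : Fin p → ℝ) :
    ∑ x, q x * ip θ x = ∑ i, θ i * ∑ x, q x * bval (x i) := by
  simp only [ip, Finset.mul_sum]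
  rw [Finset.sum_comm]
  exact Finset.sum_congr rfl fun i _ => Finset.sum_congr rfl fun x _ => by ring

lemma meanMap_eq_sum_pdens_mul (θ : Fin p → ℝ) (i : Fin p) :
    meanMap h θ i = ∑ x, pdens h θ x * bval (x i) :=
  Finset.sum_congr rfl fun _ _ => mul_comm _ _

lemma Zfun_pos (hpos : ∀ x, 0 < h x) (θ : Fin p → ℝ) : 0 < Zfun h θ :=
  Finset.sum_pos (fun x _ => mul_pos (hpos x) (exp_pos _)) univ_nonempty

lemma pdens_pos (hpos : ∀ x, 0 < h x) (θ : Fin p → ℝ) (x : Fin p → Bool) : 0 < pdens h θ x :=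
  div_pos (mul_pos (hpos x) (exp_pos _)) (Zfun_pos hpos θ)

lemma sum_pdens (hpos : ∀ x, 0 < h x) (θ : Fin p → ℝ) : ∑ x, pdens h θ x = 1 := by
  simp only [pdens, ← Finset.sum_div]
  exact div_self (Zfun_pos hpos θ).ne'

lemma log_pdens (hpos : ∀ x, 0 < h x) (θ : Fin p → ℝ) (x : Fin p → Bool) :
    log (pdens h θ x) = log (h x) + ip θ x - Afun h θ := by
  rw [pdens, Afun, log_div (mul_pos (hpos x) (exp_pos _)).ne' (Zfun_pos hpos θ).ne',
    log_mul (hpos x).ne' (exp_pos _).ne', log_exp]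

lemma log_mul_exp_ip_le_Afun (hpos : ∀ x, 0 < h x) (θ : Fin p → ℝ) (x : Fin p → Bool) :
    log (h x) + ip θ x ≤ Afun h θ := by
  rw [← log_exp (ip θ x), ← log_mul (hpos x).ne' (exp_pos _).ne']
  exact log_le_log (mul_pos (hpos x) (exp_pos _))
    (Finset.single_le_sum (fun y _ => (mul_pos (hpos y) (exp_pos _)).le) (mem_univ x))

lemma sum_mul_log_pdens (hpos : ∀ x, 0 < h x) {τ : Fin p → ℝ} {q : (Fin p → Bool) → ℝ}
    (hq1 : ∑ x, q x = 1) (hqτ : ∀ i, ∑ x, q x * bval (x i) = τ i) (θ : Fin p → ℝ) :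
    ∑ x, q x * log (pdens h θ x) = ∑ x, q x * log (h x) + ∑ i, τ i * θ i - Afun h θ := by
  simp only [log_pdens hpos, mul_sub, mul_add, Finset.sum_sub_distrib, Finset.sum_add_distrib,
    ← Finset.sum_mul, hq1, one_mul, sum_mul_ip, hqτ, mul_comm (θ _)]

lemma shEntropy_add_le (hpos : ∀ x, 0 < h x) {τ : Fin p → ℝ} {q : (Fin p → Bool) → ℝ}
    (hq0 : ∀ x, 0 ≤ q x) (hq1 : ∑ x, q x = 1) (hqτ : ∀ i, ∑ x, q x * bval (x i) = τ i)
    (θ : Fin p → ℝ) :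
    shEntropy q + ∑ x, q x * log (h x) ≤ Afun h θ - ∑ i, τ i * θ i := by
  have hgibbs := sum_mul_log_le_sum_mul_log_self hq0 (pdens_pos hpos θ)
    (by rw [sum_pdens hpos, hq1])
  rw [sum_mul_log_pdens hpos hq1 hqτ] at hgibbs
  rw [shEntropy]
  linarith

lemma hasDerivAt_Afun_add_smul (hpos : ∀ x, 0 < h x) (θ v : Fin p → ℝ) :
    HasDerivAt (fun t : ℝ => Afun h (θ + t • v)) (∑ i, v i * meanMap h θ i) 0 := by
  have hZ : HasDerivAt (fun t : ℝ => Zfun h (θ + t • v))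
      (∑ x, h x * exp (ip θ x) * ip v x) 0 := by
    simp only [Zfun, ip_add_smul]
    refine HasDerivAt.fun_sum fun x _ => ?_
    simpa [mul_assoc] using
      ((((hasDerivAt_id (0 : ℝ)).mul_const (ip v x)).const_add (ip θ x)).exp).const_mul (h x)
  refine (hZ.log (by simpa using (Zfun_pos hpos θ).ne')).congr_deriv ?_
  simp only [zero_smul, add_zero, meanMap_eq_sum_pdens_mul, ← sum_mul_ip, pdens, Finset.sum_div]
  exact Finset.sum_congr rfl fun x _ => by ring

lemma meanMap_eq_of_forall_le (hpos : ∀ x, 0 < h x) {τ θ₀ : Fin p → ℝ}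
    (hmin : ∀ θ, Afun h θ₀ - ∑ i, τ i * θ₀ i ≤ Afun h θ - ∑ i, τ i * θ i) :
    meanMap h θ₀ = τ := by
  funext i
  set v : Fin p → ℝ := Pi.single i 1
  have hlin : HasDerivAt (fun t : ℝ => ∑ j, τ j * (θ₀ + t • v) j) (∑ j, τ j * v j) 0 := by
    simpa using HasDerivAt.fun_sum (u := univ) fun j _ =>
      (((hasDerivAt_id (0 : ℝ)).mul_const (v j)).const_add (θ₀ j)).const_mul (τ j)
  have hlocal : IsLocalMin (fun t : ℝ => Afun h (θ₀ + t • v) - ∑ j, τ j * (θ₀ + t • v) j) 0 :=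
    Filter.Eventually.of_forall fun t => by simpa using hmin (θ₀ + t • v)
  have := hlocal.hasDerivAt_eq_zero ((hasDerivAt_Afun_add_smul hpos θ₀ v).sub hlin)
  simpa [v, Pi.single_apply, sub_eq_zero] using this

lemma mul_bval_decide_nonneg (t : ℝ) : t * bval (decide (0 ≤ t)) = max t 0 := by
  by_cases ht : 0 ≤ t
  · simp [bval, ht]
  · simp [bval, ht, (not_le.1 ht).le]

lemma min_mul_abs_le_max_sub_mul {τ : ℝ} (hτ : τ ∈ Set.Icc (0 : ℝ) 1) (t : ℝ) :
    min τ (1 - τ) * |t| ≤ max t 0 - τ * t := by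
  obtain ⟨hτ0, hτ1⟩ := hτ
  rcases le_or_gt 0 t with ht | ht
  · rw [abs_of_nonneg ht, max_eq_left ht]
    nlinarith [min_le_right τ (1 - τ)]
  · rw [abs_of_neg ht, max_eq_right ht.le]
    nlinarith [min_le_left τ (1 - τ)]

lemma exists_add_sum_min_mul_abs_le (hpos : ∀ x, 0 < h x) {τ : Fin p → ℝ}
    (hτ : ∀ i, τ i ∈ Set.Icc (0 : ℝ) 1) :
    ∃ c, ∀ θ, c + ∑ i, min (τ i) (1 - τ i) * |θ i| ≤ Afun h θ - ∑ i, τ i * θ i := by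
  obtain ⟨x₀, -, hx₀⟩ := Finset.exists_min_image univ (fun x => log (h x)) univ_nonempty
  refine ⟨log (h x₀), fun θ => ?_⟩
  -- the configuration `x i = (0 ≤ θ i)` maximises `ip θ x`
  have hAfun := log_mul_exp_ip_le_Afun hpos θ fun i => decide (0 ≤ θ i)
  simp only [ip, mul_bval_decide_nonneg] at hAfun
  have hlog := hx₀ (fun i => decide (0 ≤ θ i)) (mem_univ _)
  have hsum := Finset.sum_le_sum fun i (_ : i ∈ univ) => min_mul_abs_le_max_sub_mul (hτ i) (θ i)
  rw [Finset.sum_sub_distrib] at hsum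
  linarith

lemma continuous_Afun (hpos : ∀ x, 0 < h x) : Continuous (Afun h) := by
  have hZ : Continuous (Zfun h) := by unfold Zfun ip; fun_prop
  exact hZ.log fun θ => (Zfun_pos hpos θ).ne'

lemma exists_forall_Afun_sub_le (hpos : ∀ x, 0 < h x) {τ : Fin p → ℝ}
    (hτ : ∀ i, τ i ∈ Set.Ioo (0 : ℝ) 1) :
    ∃ θ₀, ∀ θ, Afun h θ₀ - ∑ i, τ i * θ₀ i ≤ Afun h θ - ∑ i, τ i * θ i := by
  obtain ⟨c, hc⟩ := exists_add_sum_min_mul_abs_le hpos fun i => Set.Ioo_subset_Icc_self (hτ i)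
  set f : (Fin p → ℝ) → ℝ := fun θ => Afun h θ - ∑ i, τ i * θ i
  have hm : ∀ i, 0 < min (τ i) (1 - τ i) := fun i => lt_min (hτ i).1 (sub_pos.2 (hτ i).2)
  have hf : Continuous f := (continuous_Afun hpos).sub (by fun_prop)
  set R : Fin p → ℝ := fun i => (f 0 - c) / min (τ i) (1 - τ i)
  refine hf.exists_forall_le_of_isBounded 0 <|
    (Bornology.IsBounded.pi fun i => Metric.isBounded_Icc (-R i) (R i)).subset
      fun θ (hθ : f θ ≤ f 0) => Set.mem_univ_pi.2 fun i => abs_le.1 ?_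
  rw [le_div_iff₀' (hm i)]
  have := Finset.single_le_sum (fun j _ => mul_nonneg (hm j).le (abs_nonneg (θ j))) (mem_univ i)
  linarith [hc θ]

end ExponentialFamily

theorem free_energy_constrained_entropy_general {p : ℕ}
    (h : (Fin p → Bool) → ℝ) (hpos : ∀ x, 0 < h x)
    (τ : Fin p → ℝ) (hτ : ∀ i, τ i ∈ Set.Ioo (0 : ℝ) 1) :
    IsGreatest
      {r : ℝ | ∃ q : (Fin p → Bool) → ℝ, (∀ x, 0 ≤ q x) ∧
        (∑ x : Fin p → Bool, q x = 1) ∧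
        (∀ i, ∑ x : Fin p → Bool, q x * bval (x i) = τ i) ∧
        r = shEntropy q + ∑ x : Fin p → Bool, q x * Real.log (h x)}
      (Ffun h τ) := by
  obtain ⟨θ₀, hmin⟩ := exists_forall_Afun_sub_le hpos hτ
  have hF : Ffun h τ = Afun h θ₀ - ∑ i, τ i * θ₀ i :=
    le_antisymm (ciInf_le ⟨_, Set.forall_mem_range.2 hmin⟩ θ₀) (le_ciInf hmin)
  have hmean : ∀ i, ∑ x, pdens h θ₀ x * bval (x i) = τ i := fun i => by
    rw [← meanMap_eq_sum_pdens_mul, meanMap_eq_of_forall_le hpos hmin]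
  refine ⟨⟨pdens h θ₀, fun x => (pdens_pos hpos θ₀ x).le, sum_pdens hpos θ₀, hmean, ?_⟩, ?_⟩
  · rw [hF, shEntropy, sum_mul_log_pdens hpos (sum_pdens hpos θ₀) hmean]
    ring
  · rintro r ⟨q, hq0, hq1, hqτ, rfl⟩
    exact le_ciInf (shEntropy_add_le hpos hq0 hq1 hqτ)

/-- Constrained entropy representation of the free energy:
`F(τ) = max { H(q) + E_q log h(X) : q pmf on {0,1}^p with E_q[X] = τ }` for `τ ∈ (0,1)^p`. -/
theorem free_energy_constrained_entropy {p : ℕ} (hp : 1 ≤ p)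
    (h : (Fin p → Bool) → ℝ) (hpos : ∀ x, 0 < h x)
    (τ : Fin p → ℝ) (hτ : ∀ i, τ i ∈ Set.Ioo (0 : ℝ) 1) :
    IsGreatest
      {r : ℝ | ∃ q : (Fin p → Bool) → ℝ, (∀ x, 0 ≤ q x) ∧
        (∑ x : Fin p → Bool, q x = 1) ∧
        (∀ i, ∑ x : Fin p → Bool, q x * bval (x i) = τ i) ∧
        r = shEntropy q + ∑ x : Fin p → Bool, q x * Real.log (h x)}
      (Ffun h τ) :=
  free_energy_constrained_entropy_general h hpos τ hτ
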